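/- A Set-functor F preserves 1/4-mono pullbacks if and only if for all relations r : X ⇸ Y and s : Y ⇸ Z such that r is the converse of a partial function or s is a partial function, one has F̄s ⋅ F̄r = F̄(s ⋅ r), where F̄ denotes the Barr lifting of F. -/

import Mathlib

open CategoryTheory

universe u

/-- A relation from `X` to `Y`. -/
abbrev Rel' (X Y : Type u) : Type u := X → Y → Prop

/-- Composite `s ⋅ r` of `r : X ⇸ Y` and `s : Y ⇸ Z`. -/
def relComp {X Y Z : Type u} (s : Rel' Y Z) (r : Rel' X Y) : Rel' X Z :=
  fun x z => ∃ y, r x y ∧ s y z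

/-- Converse relation `r°`. -/
def relConv {X Y : Type u} (r : Rel' X Y) : Rel' Y X := fun y x => r x y

/-- Identity relation `1_X`. -/
def relId (X : Type u) : Rel' X X := fun x y => x = y

/-- The graph relation of a function. -/
def graphRel {X Y : Type u} (f : X → Y) : Rel' X Y := fun x y => f x = y

/-- Pointwise order `r ≤ r'` on relations. -/
def relLe {X Y : Type u} (r r' : Rel' X Y) : Prop := ∀ x y, r x y → r' x y

/-- A relation is total if every `x` is related to some `y`. -/
def relTotal {X Y : Type u} (r : Rel' X Y) : Prop := ∀ x, ∃ y, r x y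

/-- A relation is surjective if every `y` is related to some `x`. -/
def relSurj {X Y : Type u} (r : Rel' X Y) : Prop := ∀ y, ∃ x, r x y

/-- A lax extension of a `Set`-functor `F`. -/
structure LaxExt (F : Type u ⥤ Type u) : Type (u + 1) where
  ext : ∀ {X Y : Type u}, Rel' X Y → Rel' (F.obj X) (F.obj Y)
  mono : ∀ {X Y : Type u} (r r' : Rel' X Y), relLe r r' → relLe (ext r) (ext r')
  lcomp : ∀ {X Y Z : Type u} (r : Rel' X Y) (s : Rel' Y Z),
    relLe (relComp (ext s) (ext r)) (ext (relComp s r))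
  mapLe : ∀ {X Y : Type u} (f : X → Y), relLe (graphRel (F.map (TypeCat.ofHom f))) (ext (graphRel f))
  mapConvLe : ∀ {X Y : Type u} (f : X → Y),
    relLe (relConv (graphRel (F.map (TypeCat.ofHom f)))) (ext (relConv (graphRel f)))

/-- A relax extension of a `Set`-functor `F` (a lax extension without (L2)). -/
structure RelaxExt (F : Type u ⥤ Type u) : Type (u + 1) where
  ext : ∀ {X Y : Type u}, Rel' X Y → Rel' (F.obj X) (F.obj Y)
  mono : ∀ {X Y : Type u} (r r' : Rel' X Y), relLe r r' → relLe (ext r) (ext r')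
  mapLe : ∀ {X Y : Type u} (f : X → Y), relLe (graphRel (F.map (TypeCat.ofHom f))) (ext (graphRel f))
  mapConvLe : ∀ {X Y : Type u} (f : X → Y),
    relLe (relConv (graphRel (F.map (TypeCat.ofHom f)))) (ext (relConv (graphRel f)))

/-- Normality (identity-preservation) of a lax extension. -/
def LaxExt.IsNormal {F : Type u ⥤ Type u} (L : LaxExt F) : Prop :=
  ∀ X : Type u, L.ext (relId X) = relId (F.obj X)

/-- The Barr lifting of a relation along a functor, computed from the canonical span. -/
def BarrLift (F : Type u ⥤ Type u) {X Y : Type u} (r : Rel' X Y) :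
    Rel' (F.obj X) (F.obj Y) :=
  fun a b => ∃ t : F.obj {p : X × Y // r p.1 p.2},
    F.map (TypeCat.ofHom (fun p : {p : X × Y // r p.1 p.2} => p.1.1)) t = a ∧
    F.map (TypeCat.ofHom (fun p : {p : X × Y // r p.1 p.2} => p.1.2)) t = b

/-- A commutative square of functions that is a pullback. -/
def IsPBSquare {P X Y Z : Type u} (p₁ : P → X) (p₂ : P → Y) (f : X → Z) (g : Y → Z) : Prop :=
  (∀ p, f (p₁ p) = g (p₂ p)) ∧ ∀ x y, f x = g y → ∃! p, p₁ p = x ∧ p₂ p = y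

/-- A commutative square of functions that is a weak pullback. -/
def IsWeakPBSquare {P X Y Z : Type u} (p₁ : P → X) (p₂ : P → Y) (f : X → Z) (g : Y → Z) : Prop :=
  (∀ p, f (p₁ p) = g (p₂ p)) ∧ ∀ x y, f x = g y → ∃ p, p₁ p = x ∧ p₂ p = y

/-- `F` preserves 1/4-iso pullbacks. -/
def Preserves14IsoPullbacks (F : Type u ⥤ Type u) : Prop :=
  ∀ (P X Y Z : Type u) (p₁ : P → X) (p₂ : P → Y) (f : X → Z) (g : Y → Z),
    Function.Bijective p₂ → IsPBSquare p₁ p₂ f g →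
      IsPBSquare (F.map (TypeCat.ofHom p₁)) (F.map (TypeCat.ofHom p₂)) (F.map (TypeCat.ofHom f)) (F.map (TypeCat.ofHom g))

/-- `F` preserves 1/4-iso 2/4-mono pullbacks. -/
def Preserves14Iso24MonoPullbacks (F : Type u ⥤ Type u) : Prop :=
  ∀ (P X Y Z : Type u) (p₁ : P → X) (p₂ : P → Y) (f : X → Z) (g : Y → Z),
    Function.Bijective p₂ → Function.Injective p₁ → Function.Injective g →
      IsPBSquare p₁ p₂ f g →
      IsPBSquare (F.map (TypeCat.ofHom p₁)) (F.map (TypeCat.ofHom p₂)) (F.map (TypeCat.ofHom f)) (F.map (TypeCat.ofHom g))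

/-- `F` preserves 1/4-mono pullbacks. -/
def Preserves14MonoPullbacks (F : Type u ⥤ Type u) : Prop :=
  ∀ (P X Y Z : Type u) (p₁ : P → X) (p₂ : P → Y) (f : X → Z) (g : Y → Z),
    Function.Injective p₁ → IsPBSquare p₁ p₂ f g →
      IsPBSquare (F.map (TypeCat.ofHom p₁)) (F.map (TypeCat.ofHom p₂)) (F.map (TypeCat.ofHom f)) (F.map (TypeCat.ofHom g))

/-- `F` preserves inverse images. -/
def PreservesInverseImages (F : Type u ⥤ Type u) : Prop :=
  ∀ (P X Y Z : Type u) (p₁ : P → X) (p₂ : P → Y) (f : X → Z) (g : Y → Z),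
    Function.Injective p₁ → Function.Injective g → IsPBSquare p₁ p₂ f g →
      IsPBSquare (F.map (TypeCat.ofHom p₁)) (F.map (TypeCat.ofHom p₂)) (F.map (TypeCat.ofHom f)) (F.map (TypeCat.ofHom g))

/-- `F` weakly preserves 4/4-epi pullbacks. -/
def WeaklyPreserves44EpiPullbacks (F : Type u ⥤ Type u) : Prop :=
  ∀ (P X Y Z : Type u) (p₁ : P → X) (p₂ : P → Y) (f : X → Z) (g : Y → Z),
    Function.Surjective p₁ → Function.Surjective p₂ →
    Function.Surjective f → Function.Surjective g →
    IsPBSquare p₁ p₂ f g →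
      IsWeakPBSquare (F.map (TypeCat.ofHom p₁)) (F.map (TypeCat.ofHom p₂)) (F.map (TypeCat.ofHom f)) (F.map (TypeCat.ofHom g))

/-- A (nonempty) composable sequence of relations from `X` to `Z`. -/
inductive RelChain : Type u → Type u → Type (u + 1)
  | single : ∀ {X Y : Type u}, Rel' X Y → RelChain X Y
  | cons : ∀ {X Y Z : Type u}, Rel' X Y → RelChain Y Z → RelChain X Z

/-- Composite of a composable sequence of relations (first relation applied first). -/
def RelChain.comp : ∀ {X Z : Type u}, RelChain X Z → Rel' X Z
  | _, _, .single r => r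
  | _, _, .cons r c => relComp (RelChain.comp c) r

/-- Composite of the Barr liftings of a composable sequence of relations. -/
def RelChain.barr (F : Type u ⥤ Type u) : ∀ {X Z : Type u}, RelChain X Z → Rel' (F.obj X) (F.obj Z)
  | _, _, .single r => BarrLift F r
  | _, _, .cons r c => relComp (RelChain.barr F c) (BarrLift F r)

/-- Length (number of relations) of a composable sequence. -/
def RelChain.length : ∀ {X Z : Type u}, RelChain X Z → ℕ
  | _, _, .single _ => 1
  | _, _, .cons _ c => RelChain.length c + 1

/-- All relations in a composable sequence are total and surjective. -/
def RelChain.allTS : ∀ {X Z : Type u}, RelChain X Z → Prop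
  | _, _, .single r => relTotal r ∧ relSurj r
  | _, _, .cons r c => (relTotal r ∧ relSurj r) ∧ RelChain.allTS c

/-- All relations in a composable sequence except the last one are total and surjective. -/
def RelChain.initTS : ∀ {X Z : Type u}, RelChain X Z → Prop
  | _, _, .single _ => True
  | _, _, .cons r c => (relTotal r ∧ relSurj r) ∧ RelChain.initTS c

/-- Composite of the images of a composable sequence of relations under an assignment `R`. -/
def RelChain.lift (F : Type u ⥤ Type u)
    (R : ∀ {X Y : Type u}, Rel' X Y → Rel' (F.obj X) (F.obj Y)) :
    ∀ {X Z : Type u}, RelChain X Z → Rel' (F.obj X) (F.obj Z)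
  | _, _, .single r => R r
  | _, _, .cons r c => relComp (RelChain.lift F (fun {_ _} s => R s) c) (R r)

/-- `r ⋅ (r° ⋅ r)ⁿ`. -/
def dfPow {X Y : Type u} (r : Rel' X Y) : ℕ → Rel' X Y
  | 0 => r
  | n + 1 => relComp (dfPow r n) (relComp (relConv r) r)

/-- The difunctional closure `r̂ = ⋁ₙ r ⋅ (r° ⋅ r)ⁿ` of a relation. -/
def difunClosure {X Y : Type u} (r : Rel' X Y) : Rel' X Y :=
  fun x y => ∃ n : ℕ, dfPow r n x y

/-! A 1/4-mono pullback `P` of `f : X → Z` and `g : Y → Z` tabulates `g° ⋅ f`, and injectivity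
of `P → X` makes `g° ⋅ ι` a partial function, where `ι : f[X] ↪ Z` is the inclusion. With the
corestriction `f' : X → f[X]`, two instances of the composition law give
`(Fg)° ⋅ Ff = F̄(g°) ⋅ F̄ι ⋅ F̄f' = F̄(g° ⋅ ι) ⋅ F̄f' = F̄(g° ⋅ f)`, which is weak preservation of
the pullback; uniqueness holds because the law for `m° ⋅ m = 1` makes `Fm` injective whenever
`m` is. Conversely, `F̄s ⋅ F̄r ≤ F̄(s ⋅ r)` is weak preservation of the pullback of
`R → Y ← S`, and one of its projections is injective when `r` is the converse of a partial
function or `s` is a partial function. -/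

open Function

def IsPartialFun {Y Z : Type u} (s : Rel' Y Z) : Prop :=
  ∀ y z z', s y z → s y z' → z = z'

def IsConvPartialFun {X Y : Type u} (r : Rel' X Y) : Prop :=
  ∀ x x' y, r x y → r x' y → x = x'

def BarrLiftPreservesPartialComp (F : Type u ⥤ Type u) : Prop :=
  ∀ (X Y Z : Type u) (r : Rel' X Y) (s : Rel' Y Z), IsConvPartialFun r ∨ IsPartialFun s →
    relComp (BarrLift F s) (BarrLift F r) = BarrLift F (relComp s r)

abbrev RelGraph {X Y : Type u} (r : Rel' X Y) : Type u := {p : X × Y // r p.1 p.2}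

abbrev RelCompTriple {X Y Z : Type u} (r : Rel' X Y) (s : Rel' Y Z) : Type u :=
  {w : X × Y × Z // r w.1 w.2.1 ∧ s w.2.1 w.2.2}

section Square

variable {P X Y Z : Type u} {p₁ : P → X} {p₂ : P → Y} {f : X → Z} {g : Y → Z}

theorem IsPBSquare.symm (h : IsPBSquare p₁ p₂ f g) : IsPBSquare p₂ p₁ g f :=
  ⟨fun p => (h.1 p).symm, fun y x hyx => by
    obtain ⟨p, ⟨hx, hy⟩, huniq⟩ := h.2 x y hyx.symm
    exact ⟨p, ⟨hy, hx⟩, fun p' hp' => huniq p' ⟨hp'.2, hp'.1⟩⟩⟩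

theorem IsPBSquare.isWeakPBSquare (h : IsPBSquare p₁ p₂ f g) : IsWeakPBSquare p₁ p₂ f g :=
  ⟨h.1, fun x y hxy => (h.2 x y hxy).exists⟩

theorem IsPBSquare.eq_of_fst_injective (h : IsPBSquare p₁ p₂ f g) (hp₁ : Injective p₁)
    {x : X} {y y' : Y} (hy : f x = g y) (hy' : f x = g y') : y = y' := by
  obtain ⟨p, ⟨hpx, rfl⟩, -⟩ := h.2 x y hy
  obtain ⟨p', ⟨hpx', rfl⟩, -⟩ := h.2 x y' hy'
  rw [hp₁ (hpx.trans hpx'.symm)]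

end Square

section Functor

variable (F : Type u ⥤ Type u)

theorem map_ofHom_comp_apply {X Y Z : Type u} (f : X → Y) (g : Y → Z) (x : F.obj X) :
    F.map (TypeCat.ofHom fun a => g (f a)) x =
      F.map (TypeCat.ofHom g) (F.map (TypeCat.ofHom f) x) :=
  F.map_comp_apply (TypeCat.ofHom f) (TypeCat.ofHom g) x

theorem map_ofHom_id_apply {X : Type u} (x : F.obj X) :
    F.map (TypeCat.ofHom fun a : X => a) x = x :=
  F.map_id_apply X x

theorem map_ofHom_comm {P X Y Z : Type u} {p₁ : P → X} {p₂ : P → Y} {f : X → Z} {g : Y → Z}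
    (h : ∀ p, f (p₁ p) = g (p₂ p)) (t : F.obj P) :
    F.map (TypeCat.ofHom f) (F.map (TypeCat.ofHom p₁) t) =
      F.map (TypeCat.ofHom g) (F.map (TypeCat.ofHom p₂) t) := by
  rw [← map_ofHom_comp_apply, ← map_ofHom_comp_apply, funext h]

theorem barrLift_iff_of_span {X Y P : Type u} {r : Rel' X Y} (q₁ : P → X) (q₂ : P → Y)
    (hq : ∀ p, r (q₁ p) (q₂ p)) (hcover : ∀ x y, r x y → ∃ p, q₁ p = x ∧ q₂ p = y)
    (a : F.obj X) (b : F.obj Y) :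
    BarrLift F r a b ↔
      ∃ t : F.obj P, F.map (TypeCat.ofHom q₁) t = a ∧ F.map (TypeCat.ofHom q₂) t = b := by
  constructor
  · rintro ⟨t, rfl, rfl⟩
    choose σ hσ₁ hσ₂ using fun w : RelGraph r => hcover w.1.1 w.1.2 w.2
    refine ⟨F.map (TypeCat.ofHom σ) t, ?_, ?_⟩
    · rw [← map_ofHom_comp_apply]
      simp only [hσ₁]
    · rw [← map_ofHom_comp_apply]
      simp only [hσ₂]
  · rintro ⟨t, rfl, rfl⟩
    exact ⟨F.map (TypeCat.ofHom fun p => (⟨(q₁ p, q₂ p), hq p⟩ : RelGraph r)) t,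
      (map_ofHom_comp_apply F _ _ t).symm, (map_ofHom_comp_apply F _ _ t).symm⟩

theorem barrLift_graphRel {X Y : Type u} (f : X → Y) :
    BarrLift F (graphRel f) = graphRel (F.map (TypeCat.ofHom f)) := by
  funext a b
  rw [barrLift_iff_of_span F (r := graphRel f) (fun x => x) f (fun _ => rfl)
    fun x _ h => ⟨x, rfl, h⟩]
  apply propext
  constructor
  · rintro ⟨t, rfl, rfl⟩
    rw [map_ofHom_id_apply]
    rfl
  · rintro rfl
    exact ⟨a, map_ofHom_id_apply F a, rfl⟩

theorem barrLift_relConv_graphRel {X Y : Type u} (f : X → Y) :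
    BarrLift F (relConv (graphRel f)) = relConv (graphRel (F.map (TypeCat.ofHom f))) := by
  funext b a
  rw [barrLift_iff_of_span F (r := relConv (graphRel f)) f (fun x => x) (fun _ => rfl)
    fun _ x h => ⟨x, h, rfl⟩]
  apply propext
  constructor
  · rintro ⟨t, rfl, rfl⟩
    rw [map_ofHom_id_apply]
    rfl
  · intro h
    exact ⟨a, h, map_ofHom_id_apply F a⟩

end Functor

section Composite

variable (F : Type u ⥤ Type u) {X Y Z : Type u} (r : Rel' X Y) (s : Rel' Y Z)

def RelCompTriple.fst (w : RelCompTriple r s) : RelGraph r := ⟨(w.1.1, w.1.2.1), w.2.1⟩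

def RelCompTriple.snd (w : RelCompTriple r s) : RelGraph s := ⟨(w.1.2.1, w.1.2.2), w.2.2⟩

theorem isPBSquare_relCompTriple :
    IsPBSquare (RelCompTriple.fst r s) (RelCompTriple.snd r s)
      (fun p : RelGraph r => p.1.2) (fun p : RelGraph s => p.1.1) := by
  refine ⟨fun _ => rfl, ?_⟩
  rintro ⟨⟨x, y⟩, hxy⟩ ⟨⟨y', z⟩, hyz⟩ (rfl : y = y')
  refine ⟨⟨(x, y, z), hxy, hyz⟩, ⟨rfl, rfl⟩, ?_⟩
  rintro ⟨⟨x', y', z'⟩, _⟩ ⟨hfst, hsnd⟩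
  simp only [RelCompTriple.fst, RelCompTriple.snd, Subtype.mk.injEq, Prod.mk.injEq] at hfst hsnd
  obtain ⟨rfl, rfl⟩ := hfst
  obtain ⟨-, rfl⟩ := hsnd
  rfl

variable {r s}

theorem RelCompTriple.fst_injective (hs : IsPartialFun s) :
    Injective (RelCompTriple.fst r s) := by
  rintro ⟨⟨x, y, z⟩, hxy, hyz⟩ ⟨⟨x', y', z'⟩, hxy', hyz'⟩ h
  simp only [RelCompTriple.fst, Subtype.mk.injEq, Prod.mk.injEq] at h
  obtain ⟨rfl, rfl⟩ := h
  obtain rfl := hs y z z' hyz hyz'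
  rfl

theorem RelCompTriple.snd_injective (hr : IsConvPartialFun r) :
    Injective (RelCompTriple.snd r s) := by
  rintro ⟨⟨x, y, z⟩, hxy, hyz⟩ ⟨⟨x', y', z'⟩, hxy', hyz'⟩ h
  simp only [RelCompTriple.snd, Subtype.mk.injEq, Prod.mk.injEq] at h
  obtain ⟨rfl, rfl⟩ := h
  obtain rfl := hr x x' y hxy hxy'
  rfl

theorem barrLift_relComp_eq_of_isWeakPBSquare
    (h : IsWeakPBSquare (F.map (TypeCat.ofHom (RelCompTriple.fst r s)))
      (F.map (TypeCat.ofHom (RelCompTriple.snd r s)))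
      (F.map (TypeCat.ofHom fun p : RelGraph r => p.1.2))
      (F.map (TypeCat.ofHom fun p : RelGraph s => p.1.1))) :
    relComp (BarrLift F s) (BarrLift F r) = BarrLift F (relComp s r) := by
  funext a c
  rw [barrLift_iff_of_span F (r := relComp s r) (fun w : RelCompTriple r s => w.1.1)
    (fun w => w.1.2.2) (fun w => ⟨w.1.2.1, w.2⟩) fun x z ⟨y, hxy, hyz⟩ =>
      ⟨⟨(x, y, z), hxy, hyz⟩, rfl, rfl⟩]
  apply propext
  constructor
  · rintro ⟨b, ⟨u, rfl, rfl⟩, ⟨v, hv, rfl⟩⟩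
    obtain ⟨t, rfl, rfl⟩ := h.2 u v hv.symm
    exact ⟨t, map_ofHom_comp_apply F (RelCompTriple.fst r s) (fun p => p.1.1) t,
      map_ofHom_comp_apply F (RelCompTriple.snd r s) (fun p => p.1.2) t⟩
  · rintro ⟨t, rfl, rfl⟩
    exact ⟨F.map (TypeCat.ofHom fun w : RelCompTriple r s => w.1.2.1) t,
      ⟨F.map (TypeCat.ofHom (RelCompTriple.fst r s)) t,
        (map_ofHom_comp_apply F _ _ t).symm, (map_ofHom_comp_apply F _ _ t).symm⟩,
      ⟨F.map (TypeCat.ofHom (RelCompTriple.snd r s)) t,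
        (map_ofHom_comp_apply F _ _ t).symm, (map_ofHom_comp_apply F _ _ t).symm⟩⟩

end Composite

theorem barrLiftPreservesPartialComp_of_preserves14MonoPullbacks {F : Type u ⥤ Type u}
    (hF : Preserves14MonoPullbacks F) : BarrLiftPreservesPartialComp F := by
  intro X Y Z r s hrs
  apply barrLift_relComp_eq_of_isWeakPBSquare
  rcases hrs with hr | hs
  · exact (hF _ _ _ _ _ _ _ _ (RelCompTriple.snd_injective hr)
      (isPBSquare_relCompTriple r s).symm).symm.isWeakPBSquare
  · exact (hF _ _ _ _ _ _ _ _ (RelCompTriple.fst_injective hs)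
      (isPBSquare_relCompTriple r s)).isWeakPBSquare

section Converse

variable {F : Type u ⥤ Type u} (hF : BarrLiftPreservesPartialComp F)
include hF

theorem map_injective_of_barrLiftPreservesPartialComp {P X : Type u} {m : P → X}
    (hm : Injective m) : Injective (F.map (TypeCat.ofHom m)) := by
  intro p p' hpp'
  have hcomp := hF P X P (graphRel m) (relConv (graphRel m))
    (Or.inr fun _ _ _ hz hz' => hm (hz.trans hz'.symm))
  rw [barrLift_graphRel, barrLift_relConv_graphRel] at hcomp
  have hpp : BarrLift F (relComp (relConv (graphRel m)) (graphRel m)) p p' := by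
    rw [← hcomp]
    exact ⟨_, rfl, hpp'.symm⟩
  obtain ⟨t, rfl, rfl⟩ := (barrLift_iff_of_span F (fun p => p) (fun p => p)
    (fun p => ⟨m p, rfl, rfl⟩) (fun _ _ ⟨_, hx, hy⟩ => ⟨_, rfl, hm (hx.trans hy.symm)⟩)
    p p').1 hpp
  rfl

theorem exists_map_eq_of_isPBSquare {P X Y Z : Type u} {p₁ : P → X} {p₂ : P → Y} {f : X → Z}
    {g : Y → Z} (hp₁ : Injective p₁) (hpb : IsPBSquare p₁ p₂ f g) {a : F.obj X} {b : F.obj Y}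
    (hab : F.map (TypeCat.ofHom f) a = F.map (TypeCat.ofHom g) b) :
    ∃ t : F.obj P, F.map (TypeCat.ofHom p₁) t = a ∧ F.map (TypeCat.ofHom p₂) t = b := by
  let ι : Set.range f → Z := Subtype.val
  have hι : IsConvPartialFun (graphRel ι) := fun _ _ _ hw hw' =>
    Subtype.val_injective (hw.trans hw'.symm)
  have hgι : IsPartialFun (relComp (relConv (graphRel g)) (graphRel ι)) := by
    rintro ⟨_, x, rfl⟩ y y' ⟨_, rfl, hy⟩ ⟨_, rfl, hy'⟩
    exact hpb.eq_of_fst_injective hp₁ hy.symm hy'.symm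
  have hb : BarrLift F (relComp (relConv (graphRel g)) (graphRel ι))
      (F.map (TypeCat.ofHom (Set.rangeFactorization f)) a) b := by
    rw [← hF _ _ _ _ _ (Or.inl hι), barrLift_graphRel, barrLift_relConv_graphRel]
    exact ⟨_, (map_ofHom_comp_apply F _ ι a).symm, hab.symm⟩
  have hab' : BarrLift F (relComp (relComp (relConv (graphRel g)) (graphRel ι))
      (graphRel (Set.rangeFactorization f))) a b := by
    rw [← hF _ _ _ _ _ (Or.inr hgι), barrLift_graphRel]
    exact ⟨_, rfl, hb⟩
  refine (barrLift_iff_of_span F p₁ p₂ (fun p => ⟨_, rfl, _, rfl, (hpb.1 p).symm⟩) ?_ a b).1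
    hab'
  rintro x y ⟨_, rfl, _, rfl, hxy⟩
  exact (hpb.2 x y hxy.symm).exists

theorem preserves14MonoPullbacks_of_barrLiftPreservesPartialComp :
    Preserves14MonoPullbacks F := by
  intro P X Y Z p₁ p₂ f g hp₁ hpb
  refine ⟨map_ofHom_comm F hpb.1, fun a b hab => ?_⟩
  obtain ⟨t, ht⟩ := exists_map_eq_of_isPBSquare hF hp₁ hpb hab
  exact ⟨t, ht, fun t' ht' =>
    map_injective_of_barrLiftPreservesPartialComp hF hp₁ (ht'.1.trans ht.1.symm)⟩

end Converse

/-- A Set-functor preserves 1/4-mono pullbacks iff the Barr lifting is functorial on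
composites in which the first relation is the converse of a partial function or the
second relation is a partial function. -/
theorem stmt16 (F : Type u ⥤ Type u) :
    Preserves14MonoPullbacks F ↔
      ∀ (X Y Z : Type u) (r : Rel' X Y) (s : Rel' Y Z),
        ((∀ (x x' : X) (y : Y), r x y → r x' y → x = x') ∨
          (∀ (y : Y) (z z' : Z), s y z → s y z' → z = z')) →
        relComp (BarrLift F s) (BarrLift F r) = BarrLift F (relComp s r) :=
  ⟨barrLiftPreservesPartialComp_of_preserves14MonoPullbacks,
    preserves14MonoPullbacks_of_barrLiftPreservesPartialComp⟩
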